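/- arXiv:2306.05316 — 8 statements merged into one kernel-verified Lean document; each statement's English description precedes it below -/
import Mathlib

section
/- For any real number p > 0 and vectors x, y in ℝ^n, one has (|x|^p x - |y|^p y) · (x - y) ≥ (1/2) (|x|^p + |y|^p) |x - y|^2. -/
theorem inner_rpow_smul_sub_ge {n : ℕ} (p : ℝ) (hp : 0 < p)
    (x y : EuclideanSpace ℝ (Fin n)) :
    (@inner ℝ _ _ (‖x‖ ^ p • x - ‖y‖ ^ p • y) (x - y)) ≥
      (1 / 2) * (‖x‖ ^ p + ‖y‖ ^ p) * ‖x - y‖ ^ 2 := by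
  have key : (‖x‖ ^ p - ‖y‖ ^ p) * (‖x‖ ^ 2 - ‖y‖ ^ 2) ≥ 0 := by
    rcases le_total ‖x‖ ‖y‖ with h | h
    · have h1 : ‖x‖ ^ p ≤ ‖y‖ ^ p := Real.rpow_le_rpow (norm_nonneg x) h hp.le
      have h2 : ‖x‖ ^ 2 ≤ ‖y‖ ^ 2 := pow_le_pow_left₀ (norm_nonneg x) h 2
      nlinarith
    · have h1 : ‖y‖ ^ p ≤ ‖x‖ ^ p := Real.rpow_le_rpow (norm_nonneg y) h hp.le
      have h2 : ‖y‖ ^ 2 ≤ ‖x‖ ^ 2 := pow_le_pow_left₀ (norm_nonneg y) h 2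
      nlinarith
  have expand : (@inner ℝ _ _ (‖x‖ ^ p • x - ‖y‖ ^ p • y) (x - y)) =
      ‖x‖ ^ p * ‖x‖ ^ 2 - (‖x‖ ^ p + ‖y‖ ^ p) * (@inner ℝ _ _ x y)
        + ‖y‖ ^ p * ‖y‖ ^ 2 := by
    rw [inner_sub_left, real_inner_smul_left, real_inner_smul_left, inner_sub_right,
      inner_sub_right, real_inner_self_eq_norm_sq, real_inner_self_eq_norm_sq,
      real_inner_comm y x]
    ring
  have normsub : ‖x - y‖ ^ 2 = ‖x‖ ^ 2 - 2 * (@inner ℝ _ _ x y) + ‖y‖ ^ 2 :=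
    norm_sub_sq_real x y
  rw [expand, normsub]
  nlinarith [key]
end

section
/- For any real number p > 0 and vectors x, y in ℝ^n, one has (|x|^p x - |y|^p y) · (x - y) ≥ 2^{-(1+(p-1)^+)} |x - y|^{p+2}. -/
open scoped NNReal

/-- `(a+b)^p ≤ 2^(max (p-1) 0) * (a^p + b^p)` for nonnegative reals. -/
lemma aux_rpow_add_le (a b : ℝ) (ha : 0 ≤ a) (hb : 0 ≤ b) (p : ℝ) (hp : 0 < p) :
    (a + b) ^ p ≤ (2 : ℝ) ^ max (p - 1) 0 * (a ^ p + b ^ p) := by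
  rcases le_total p 1 with h1 | h1
  · have hmax : max (p - 1) 0 = 0 := max_eq_right (by linarith)
    rw [hmax, Real.rpow_zero, one_mul]
    have := NNReal.rpow_add_le_add_rpow a.toNNReal b.toNNReal hp.le h1
    have h2 : ((a.toNNReal + b.toNNReal : ℝ≥0) : ℝ) ^ p
        ≤ ((a.toNNReal ^ p + b.toNNReal ^ p : ℝ≥0) : ℝ) := by
      rw [← NNReal.coe_rpow]
      exact_mod_cast this
    simpa [Real.coe_toNNReal a ha, Real.coe_toNNReal b hb, NNReal.coe_rpow] using h2
  · have hmax : max (p - 1) 0 = p - 1 := max_eq_left (by linarith)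
    rw [hmax]
    have := NNReal.rpow_add_le_mul_rpow_add_rpow a.toNNReal b.toNNReal h1
    have h2 : ((a.toNNReal + b.toNNReal : ℝ≥0) : ℝ) ^ p
        ≤ (((2 : ℝ≥0) ^ (p - 1) * (a.toNNReal ^ p + b.toNNReal ^ p) : ℝ≥0) : ℝ) := by
      rw [← NNReal.coe_rpow]
      exact_mod_cast this
    simpa [Real.coe_toNNReal a ha, Real.coe_toNNReal b hb, NNReal.coe_rpow] using h2

theorem inner_rpow_smul_sub_ge_pow {n : ℕ} (p : ℝ) (hp : 0 < p)
    (x y : EuclideanSpace ℝ (Fin n)) :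
    (@inner ℝ _ _ (‖x‖ ^ p • x - ‖y‖ ^ p • y) (x - y)) ≥
      2 ^ (-(1 + max (p - 1) 0)) * ‖x - y‖ ^ (p + 2) := by
  set a := ‖x‖ with ha_def
  set b := ‖y‖ with hb_def
  set d := ‖x - y‖ with hd_def
  have ha : 0 ≤ a := norm_nonneg x
  have hb : 0 ≤ b := norm_nonneg y
  have hd : 0 ≤ d := norm_nonneg _
  rcases eq_or_lt_of_le hd with hd0 | hd0
  · -- d = 0
    have hxy : x = y := by
      have : ‖x - y‖ = 0 := hd0.symm
      rwa [norm_sub_eq_zero_iff] at this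
    subst hxy
    rw [← hd0, Real.zero_rpow (by positivity)]
    simp
  · -- d > 0
    set t : ℝ := inner ℝ x y with ht_def
    have hLHS : (@inner ℝ _ _ (a ^ p • x - b ^ p • y) (x - y))
        = a ^ p * a ^ 2 + b ^ p * b ^ 2 - (a ^ p + b ^ p) * t := by
      rw [inner_sub_left, inner_sub_right, inner_sub_right,
        real_inner_smul_left, real_inner_smul_left, real_inner_smul_left,
        real_inner_smul_left, real_inner_self_eq_norm_sq, real_inner_self_eq_norm_sq]
      simp only [real_inner_comm x y]
      rw [← ht_def, ← ha_def, ← hb_def]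
      ring
    have hd2 : d ^ 2 = a ^ 2 + b ^ 2 - 2 * t := by
      rw [hd_def, ht_def, ha_def, hb_def, @norm_sub_sq_real]
      ring
    -- step 1 : LHS ≥ (1/2)(a^p+b^p) d^2
    have hstep1 : (@inner ℝ _ _ (a ^ p • x - b ^ p • y) (x - y))
        ≥ (1 / 2) * (a ^ p + b ^ p) * d ^ 2 := by
      rw [hLHS, hd2]
      have hsame : 0 ≤ (a ^ p - b ^ p) * (a ^ 2 - b ^ 2) := by
        rcases le_total a b with hab | hab
        · have h1 : a ^ p ≤ b ^ p := Real.rpow_le_rpow ha hab hp.le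
          have h2 : a ^ 2 ≤ b ^ 2 := by nlinarith
          nlinarith
        · have h1 : b ^ p ≤ a ^ p := Real.rpow_le_rpow hb hab hp.le
          have h2 : b ^ 2 ≤ a ^ 2 := by nlinarith
          nlinarith
      nlinarith
    -- step 2 : d^p ≤ 2^(max (p-1) 0) * (a^p + b^p)
    have hdab : d ≤ a + b := norm_sub_le x y
    have hstep2 : d ^ p ≤ (2 : ℝ) ^ max (p - 1) 0 * (a ^ p + b ^ p) :=
      le_trans (Real.rpow_le_rpow hd hdab hp.le) (aux_rpow_add_le a b ha hb p hp)
    -- combine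
    have hsplit : d ^ (p + 2) = d ^ p * d ^ 2 := by
      rw [Real.rpow_add hd0, Real.rpow_two]
    have hc : (2 : ℝ) ^ (-(1 + max (p - 1) 0))
        = (1 / 2) * ((2 : ℝ) ^ max (p - 1) 0)⁻¹ := by
      rw [Real.rpow_neg (by norm_num), Real.rpow_add (by norm_num), Real.rpow_one]
      rw [mul_inv]
      ring
    have hpow_pos : (0 : ℝ) < (2 : ℝ) ^ max (p - 1) 0 := Real.rpow_pos_of_pos (by norm_num) _
    have hfinal : 2 ^ (-(1 + max (p - 1) 0)) * d ^ (p + 2)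
        ≤ (1 / 2) * (a ^ p + b ^ p) * d ^ 2 := by
      rw [hc, hsplit]
      have h1 : ((2 : ℝ) ^ max (p - 1) 0)⁻¹ * d ^ p ≤ a ^ p + b ^ p := by
        rw [inv_mul_le_iff₀ hpow_pos]
        exact hstep2
      have hd2nn : (0 : ℝ) ≤ d ^ 2 := sq_nonneg d
      nlinarith
    exact le_trans hfinal hstep1
end

section
/- For any real number p with -1 < p < 0 and any real numbers x, y, one has ||x|^p x - |y|^p y| ≤ 2^{-p} |x - y|^{1+p}, where the expression |x|^p x is interpreted as 0 when x = 0. -/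
open Real

private lemma sub_aux {α : ℝ} (h0 : 0 ≤ α) (h1 : α ≤ 1) {a b : ℝ} (ha : 0 ≤ a) (hb : 0 ≤ b) :
    (a + b) ^ α ≤ a ^ α + b ^ α := by
  lift a to NNReal using ha
  lift b to NNReal using hb
  have := NNReal.rpow_add_le_add_rpow a b h0 h1
  exact_mod_cast this

private lemma conc_aux {α : ℝ} (h0 : 0 < α) (h1 : α ≤ 1) {a b : ℝ} (ha : 0 ≤ a) (hb : 0 ≤ b) :
    a ^ α + b ^ α ≤ 2 ^ (1 - α) * (a + b) ^ α := by
  lift a to NNReal using ha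
  lift b to NNReal using hb
  have hq : 1 ≤ 1 / α := one_le_one_div h0 h1
  have h := NNReal.rpow_add_le_mul_rpow_add_rpow (a ^ α) (b ^ α) hq
  have hinv : ∀ c : NNReal, (c ^ α) ^ (1 / α) = c := by
    intro c
    rw [← NNReal.rpow_mul, mul_one_div, div_self h0.ne', NNReal.rpow_one]
  rw [hinv, hinv] at h
  have h2 := NNReal.rpow_le_rpow h h0.le
  rw [← NNReal.rpow_mul, one_div, inv_mul_cancel₀ h0.ne', NNReal.rpow_one,
    NNReal.mul_rpow, ← NNReal.rpow_mul] at h2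
  rw [show (α⁻¹ - 1) * α = 1 - α by field_simp] at h2
  exact_mod_cast h2

private lemma f_eq_nonneg {p : ℝ} (hp : (1:ℝ) + p ≠ 0) {t : ℝ} (ht : 0 ≤ t) :
    |t| ^ p * t = t ^ (1 + p) := by
  rcases ht.eq_or_lt with h | h
  · simp [← h, Real.zero_rpow hp]
  · rw [abs_of_pos h, add_comm, Real.rpow_add_one h.ne']

private lemma f_eq_nonpos {p : ℝ} (hp : (1:ℝ) + p ≠ 0) {t : ℝ} (ht : t ≤ 0) :
    |t| ^ p * t = -((-t) ^ (1 + p)) := by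
  have := f_eq_nonneg hp (neg_nonneg.2 ht)
  rw [abs_neg] at this
  linarith [this]

private lemma main_aux (p : ℝ) (hp1 : -1 < p) (hp0 : p < 0) {x y : ℝ} (hxy : y ≤ x) :
    0 ≤ |x| ^ p * x - |y| ^ p * y ∧
      |x| ^ p * x - |y| ^ p * y ≤ 2 ^ (-p) * (x - y) ^ (1 + p) := by
  set α : ℝ := 1 + p with hα
  have hα0 : 0 < α := by rw [hα]; linarith
  have hα1 : α ≤ 1 := by rw [hα]; linarith
  have hαne : (1:ℝ) + p ≠ 0 := by linarith
  have hmp : -p = 1 - α := by rw [hα]; ring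
  have h2 : (1:ℝ) ≤ 2 ^ (-p) := by
    rw [show (1:ℝ) = (2:ℝ) ^ (0:ℝ) by simp]
    exact Real.rpow_le_rpow_of_exponent_le one_le_two (by linarith)
  rcases le_or_gt 0 y with hy | hy
  · -- both nonneg
    have hx : 0 ≤ x := le_trans hy hxy
    rw [f_eq_nonneg hαne hx, f_eq_nonneg hαne hy]
    constructor
    · have := Real.rpow_le_rpow hy hxy hα0.le
      linarith
    · have h1 : x ^ α ≤ (x - y) ^ α + y ^ α := by
        have := sub_aux hα0.le hα1 (a := x - y) (b := y) (by linarith) hy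
        simpa [sub_add_cancel] using this
      have h3 : (x - y) ^ α ≤ 2 ^ (-p) * (x - y) ^ α := by
        nth_rw 1 [← one_mul ((x - y) ^ α)]
        exact mul_le_mul_of_nonneg_right h2 (Real.rpow_nonneg (by linarith) _)
      linarith
  · rcases le_or_gt x 0 with hx | hx
    · -- both nonpos
      rw [f_eq_nonpos hαne hx, f_eq_nonpos hαne hy.le]
      constructor
      · have := Real.rpow_le_rpow (neg_nonneg.2 hx) (by linarith : -x ≤ -y) hα0.le
        linarith
      · have h1 : (-y) ^ α ≤ (x - y) ^ α + (-x) ^ α := by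
          have := sub_aux hα0.le hα1 (a := x - y) (b := -x) (by linarith)
            (neg_nonneg.2 hx)
          simpa [show x - y + -x = -y by ring] using this
        have h3 : (x - y) ^ α ≤ 2 ^ (-p) * (x - y) ^ α := by
          nth_rw 1 [← one_mul ((x - y) ^ α)]
          exact mul_le_mul_of_nonneg_right h2 (Real.rpow_nonneg (by linarith) _)
        linarith
    · -- y < 0 < x
      rw [f_eq_nonneg hαne hx.le, f_eq_nonpos hαne hy.le]
      constructor
      · have := Real.rpow_nonneg hx.le α
        have := Real.rpow_nonneg (neg_nonneg.2 hy.le) α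
        linarith
      · have h1 := conc_aux hα0 hα1 (a := x) (b := -y) hx.le (neg_nonneg.2 hy.le)
        rw [show x + -y = x - y by ring, ← hmp] at h1
        linarith

theorem abs_rpow_mul_sub_le (p : ℝ) (hp1 : -1 < p) (hp0 : p < 0) (x y : ℝ) :
    |(|x| ^ p * x - |y| ^ p * y)| ≤ 2 ^ (-p) * |x - y| ^ (1 + p) := by
  rcases le_total y x with h | h
  · obtain ⟨h0, hle⟩ := main_aux p hp1 hp0 h
    rw [abs_of_nonneg h0, abs_of_nonneg (by linarith : 0 ≤ x - y)]
    exact hle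
  · obtain ⟨h0, hle⟩ := main_aux p hp1 hp0 h
    rw [abs_sub_comm, abs_sub_comm x y, abs_of_nonneg h0,
      abs_of_nonneg (by linarith : 0 ≤ y - x)]
    exact hle
end

section
/- For any real number p with -1 < p < 0 and vectors x, y in ℝ^n, one has (|x|^p x - |y|^p y) · (x - y) ≥ (1+p) (|x| + |y|)^p |x - y|^2, where all expressions involving negative powers of zero are interpreted as 0 when x = y = 0. -/
open Real

/-- Core scalar inequality: for `0 < b ≤ a` and `0 < q < 1`,
`q * (a+b)^(q-1) * (a-b) ≤ a^q - b^q`. -/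
lemma core_ineq (q a b : ℝ) (hq0 : 0 < q) (hq1 : q < 1) (hb : 0 < b) (hba : b ≤ a) :
    q * (a + b) ^ (q - 1) * (a - b) ≤ a ^ q - b ^ q := by
  have ha : 0 < a := lt_of_lt_of_le hb hba
  have h1 : (a + b) ^ (q - 1) ≤ a ^ (q - 1) :=
    Real.rpow_le_rpow_of_nonpos ha (by linarith) (by linarith)
  have hstep : q * a ^ (q - 1) * (a - b) ≤ a ^ q - b ^ q := by
    -- weighted AM-GM: b^q = (a^q)^(1-q) * (a^(q-1)*b)^q ≤ (1-q)*a^q + q*(a^(q-1)*b)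
    have hamgm := Real.geom_mean_le_arith_mean2_weighted (w₁ := 1 - q) (w₂ := q)
      (p₁ := a ^ q) (p₂ := a ^ (q - 1) * b) (by linarith) hq0.le
      (Real.rpow_nonneg ha.le q)
      (mul_nonneg (Real.rpow_nonneg ha.le _) hb.le) (by ring)
    have hb' : (a ^ q) ^ (1 - q) * (a ^ (q - 1) * b) ^ q = b ^ q := by
      rw [Real.mul_rpow (Real.rpow_nonneg ha.le _) hb.le,
        ← Real.rpow_mul ha.le, ← Real.rpow_mul ha.le]
      rw [show q * (1 - q) = -( (q-1) * q) by ring, Real.rpow_neg ha.le]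
      field_simp
    rw [hb'] at hamgm
    have haq : a ^ (q - 1) * a = a ^ q := by
      rw [← Real.rpow_add_one ha.ne' (q - 1), show q - 1 + 1 = q by ring]
    nlinarith [hamgm]
  calc q * (a + b) ^ (q - 1) * (a - b) ≤ q * a ^ (q - 1) * (a - b) := by
        apply mul_le_mul_of_nonneg_right _ (by linarith)
        exact mul_le_mul_of_nonneg_left h1 hq0.le
    _ ≤ a ^ q - b ^ q := hstep

/-- Boundary inequality for `0 < b ≤ a`. -/
lemma boundary_ineq (p a b : ℝ) (hp1 : -1 < p) (hp0 : p < 0) (hb : 0 < b) (hba : b ≤ a) :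
    (1 + p) * (a + b) ^ p * (a - b) ^ 2 ≤ (a ^ p * a - b ^ p * b) * (a - b) := by
  have ha : 0 < a := lt_of_lt_of_le hb hba
  have hcore := core_ineq (p + 1) a b (by linarith) (by linarith) hb hba
  have e1 : a ^ (p + 1) = a ^ p * a := by rw [Real.rpow_add ha, Real.rpow_one]
  have e2 : b ^ (p + 1) = b ^ p * b := by rw [Real.rpow_add hb, Real.rpow_one]
  have e3 : (p : ℝ) + 1 - 1 = p := by ring
  rw [e1, e2, e3] at hcore
  nlinarith [mul_le_mul_of_nonneg_right hcore (show (0:ℝ) ≤ a - b by linarith)]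

/-- Key scalar inequality. -/
lemma key_ineq (p a b t : ℝ) (hp1 : -1 < p) (hp0 : p < 0) (ha : 0 ≤ a) (hb : 0 ≤ b)
    (ht1 : -(a * b) ≤ t) (ht2 : t ≤ a * b) :
    (1 + p) * (a + b) ^ p * (a ^ 2 + b ^ 2 - 2 * t) ≤
      a ^ p * a ^ 2 + b ^ p * b ^ 2 - (a ^ p + b ^ p) * t := by
  rcases eq_or_lt_of_le ha with rfl | ha
  · -- a = 0
    have ht : t = 0 := le_antisymm (by simpa using ht2) (by simpa using ht1)
    rw [Real.zero_rpow hp0.ne, ht]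
    rcases eq_or_lt_of_le hb with rfl | hb
    · rw [Real.zero_rpow hp0.ne]; norm_num
    · simp only [zero_add]
      have : 0 ≤ b ^ p * b ^ 2 := mul_nonneg (Real.rpow_nonneg hb.le _) (sq_nonneg b)
      nlinarith
  rcases eq_or_lt_of_le hb with rfl | hb
  · -- b = 0
    have ht : t = 0 := le_antisymm (by simpa using ht2) (by simpa using ht1)
    rw [Real.zero_rpow hp0.ne, ht]
    simp only [add_zero]
    have : 0 ≤ a ^ p * a ^ 2 := mul_nonneg (Real.rpow_nonneg ha.le _) (sq_nonneg a)
    nlinarith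
  -- both positive
  have hab : 0 < a + b := by linarith
  have hca : (a + b) ^ p ≤ a ^ p := Real.rpow_le_rpow_of_nonpos ha (by linarith) hp0.le
  have hcb : (a + b) ^ p ≤ b ^ p := Real.rpow_le_rpow_of_nonpos hb (by linarith) hp0.le
  have habp : 0 ≤ (a + b) ^ p := Real.rpow_nonneg hab.le _
  have hcoef : 2 * (1 + p) * (a + b) ^ p ≤ a ^ p + b ^ p := by
    have h1 : 2 * (1 + p) * (a + b) ^ p ≤ (1 + p) * (a ^ p + b ^ p) := by nlinarith
    have h2 : (1 + p) * (a ^ p + b ^ p) ≤ a ^ p + b ^ p := by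
      have : 0 ≤ a ^ p + b ^ p := by positivity
      nlinarith
    linarith
  have hbd : (1 + p) * (a + b) ^ p * (a - b) ^ 2 ≤ (a ^ p * a - b ^ p * b) * (a - b) := by
    rcases le_total b a with hba | hba
    · exact boundary_ineq p a b hp1 hp0 hb hba
    · have := boundary_ineq p b a hp1 hp0 ha hba
      have e : b + a = a + b := by ring
      rw [e] at this
      nlinarith [this]
  nlinarith [mul_nonneg (sub_nonneg.2 ht2) (sub_nonneg.2 hcoef)]

theorem inner_neg_rpow_smul_sub_ge {n : ℕ} (p : ℝ) (hp1 : -1 < p) (hp0 : p < 0)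
    (x y : EuclideanSpace ℝ (Fin n)) :
    (@inner ℝ _ _ (‖x‖ ^ p • x - ‖y‖ ^ p • y) (x - y)) ≥
      (1 + p) * (‖x‖ + ‖y‖) ^ p * ‖x - y‖ ^ 2 := by
  have hexp : (inner ℝ (‖x‖ ^ p • x - ‖y‖ ^ p • y) (x - y) : ℝ) =
      ‖x‖ ^ p * ‖x‖ ^ 2 + ‖y‖ ^ p * ‖y‖ ^ 2 - (‖x‖ ^ p + ‖y‖ ^ p) * (inner ℝ x y : ℝ) := by
    rw [inner_sub_left, inner_sub_right, inner_sub_right, real_inner_smul_left,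
      real_inner_smul_left, real_inner_smul_left, real_inner_smul_left,
      real_inner_self_eq_norm_sq, real_inner_self_eq_norm_sq, real_inner_comm y x]
    ring
  have hns : ‖x - y‖ ^ 2 = ‖x‖ ^ 2 + ‖y‖ ^ 2 - 2 * (inner ℝ x y : ℝ) := by
    rw [norm_sub_sq_real]; ring
  rw [ge_iff_le, hexp, hns]
  have habs := abs_real_inner_le_norm x y
  rw [abs_le] at habs
  exact key_ineq p ‖x‖ ‖y‖ (inner ℝ x y) hp1 hp0 (norm_nonneg x) (norm_nonneg y)
    (by linarith [habs.1]) habs.2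
end

section
/- For any vectors x, y in ℝ^n and real number α > 0, the integral ∫₀¹ |t x + (1-t) y|^α dt is at least |x - y|^α / (2^{α+1} (α+1)). -/
open intervalIntegral Real

lemma aux_cont {n : ℕ} (α : ℝ) (hα : 0 < α) (x y : EuclideanSpace ℝ (Fin n)) :
    Continuous fun t : ℝ => ‖t • x + (1 - t) • y‖ ^ α := by
  apply Continuous.rpow_const
  · exact ((continuous_id.smul continuous_const).add
      ((continuous_const.sub continuous_id).smul continuous_const)).norm
  · intro t; exact Or.inr hα.le

lemma aux_bound {n : ℕ} (α : ℝ) (hα : 0 < α) (x y : EuclideanSpace ℝ (Fin n))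
    (hd : 0 < ‖x - y‖)
    (hc : -(1/2) ≤ (inner ℝ y (x - y) : ℝ) / ‖x - y‖ ^ 2) :
    (∫ t in (0:ℝ)..1, ‖t • x + (1 - t) • y‖ ^ α) ≥
      ‖x - y‖ ^ α / (2 ^ (α + 1) * (α + 1)) := by
  set v := x - y with hv
  set d := ‖v‖ with hdd
  set c := (inner ℝ y v : ℝ) / d ^ 2 with hcc
  have hd2 : (0:ℝ) < d ^ 2 := by positivity
  have hz : ∀ t : ℝ, t • x + (1 - t) • y = y + t • v := by
    intro t
    rw [hv, smul_sub, sub_smul, one_smul]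
    abel
  have key : ∀ t : ℝ, |t + c| * d ≤ ‖y + t • v‖ := by
    intro t
    have hCS := abs_real_inner_le_norm (y + t • v) v
    have hinner : (inner ℝ (y + t • v) v : ℝ) = (t + c) * d ^ 2 := by
      rw [inner_add_left, real_inner_smul_left, real_inner_self_eq_norm_sq]
      rw [hcc]
      field_simp
      ring
    rw [hinner, abs_mul, abs_of_pos hd2] at hCS
    have : |t + c| * d ^ 2 ≤ (‖y + t • v‖ * d) := hCS
    nlinarith [abs_nonneg (t + c), norm_nonneg (y + t • v)]
  -- pointwise bound on [1/2, 1]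
  have ptwise : ∀ t ∈ Set.Icc (1/2 : ℝ) 1,
      (t - 1/2) ^ α * d ^ α ≤ ‖t • x + (1 - t) • y‖ ^ α := by
    intro t ht
    rw [hz t, ← Real.mul_rpow (by linarith [ht.1]) hd.le]
    apply Real.rpow_le_rpow (by nlinarith [ht.1, hd.le]) _ hα.le
    calc (t - 1/2) * d ≤ |t + c| * d := by
          apply mul_le_mul_of_nonneg_right _ hd.le
          calc t - 1/2 ≤ t + c := by linarith
            _ ≤ |t + c| := le_abs_self _
      _ ≤ ‖y + t • v‖ := key t
  have hcont := aux_cont α hα x y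
  have hint1 : IntervalIntegrable (fun t : ℝ => ‖t • x + (1 - t) • y‖ ^ α)
      MeasureTheory.volume (0:ℝ) (1/2) := hcont.intervalIntegrable _ _
  have hint2 : IntervalIntegrable (fun t : ℝ => ‖t • x + (1 - t) • y‖ ^ α)
      MeasureTheory.volume (1/2:ℝ) 1 := hcont.intervalIntegrable _ _
  have hcontg : Continuous fun t : ℝ => (t - 1/2) ^ α * d ^ α := by
    apply Continuous.mul _ continuous_const
    apply Continuous.rpow_const (continuous_id.sub continuous_const)
    intro t; exact Or.inr hα.le
  have hintg : IntervalIntegrable (fun t : ℝ => (t - 1/2) ^ α * d ^ α)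
      MeasureTheory.volume (1/2:ℝ) 1 := hcontg.intervalIntegrable _ _
  have hsplit : (∫ t in (0:ℝ)..1, ‖t • x + (1 - t) • y‖ ^ α) =
      (∫ t in (0:ℝ)..(1/2), ‖t • x + (1 - t) • y‖ ^ α) +
      (∫ t in (1/2:ℝ)..1, ‖t • x + (1 - t) • y‖ ^ α) :=
    (intervalIntegral.integral_add_adjacent_intervals hint1 hint2).symm
  have h1 : (0:ℝ) ≤ ∫ t in (0:ℝ)..(1/2), ‖t • x + (1 - t) • y‖ ^ α := by
    apply intervalIntegral.integral_nonneg (by norm_num)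
    intro t _; positivity
  have h2 : (∫ t in (1/2:ℝ)..1, (t - 1/2) ^ α * d ^ α) ≤
      ∫ t in (1/2:ℝ)..1, ‖t • x + (1 - t) • y‖ ^ α :=
    intervalIntegral.integral_mono_on (by norm_num) hintg hint2 ptwise
  have hcomp : (∫ t in (1/2:ℝ)..1, (t - 1/2) ^ α * d ^ α) =
      d ^ α / (2 ^ (α + 1) * (α + 1)) := by
    rw [intervalIntegral.integral_mul_const]
    have h12 : (∫ t in (1/2:ℝ)..1, (t - 1/2) ^ α) = ∫ u in (1/2 - 1/2 : ℝ)..(1 - 1/2), u ^ α :=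
      intervalIntegral.integral_comp_sub_right (fun u : ℝ => u ^ α) (1/2)
    rw [h12, show (1/2 - 1/2 : ℝ) = 0 by norm_num, show (1 - 1/2 : ℝ) = 1/2 by norm_num,
      integral_rpow (Or.inl (by linarith))]
    have h0 : (0:ℝ) ^ (α + 1) = 0 := Real.zero_rpow (by linarith)
    have hhalf : ((1/2 : ℝ)) ^ (α + 1) = (2 ^ (α + 1))⁻¹ := by
      rw [one_div, Real.inv_rpow (by norm_num)]
    rw [h0, hhalf]
    have h2p : (0:ℝ) < 2 ^ (α + 1) := Real.rpow_pos_of_pos (by norm_num) _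
    field_simp
    ring
  rw [ge_iff_le, hsplit, ← hcomp]
  linarith

theorem integral_norm_segment_rpow_ge {n : ℕ} (α : ℝ) (hα : 0 < α)
    (x y : EuclideanSpace ℝ (Fin n)) :
    (∫ t in (0:ℝ)..1, ‖t • x + (1 - t) • y‖ ^ α) ≥
      ‖x - y‖ ^ α / (2 ^ (α + 1) * (α + 1)) := by
  rcases eq_or_lt_of_le (norm_nonneg (x - y)) with h0 | hd
  · -- x = y case: RHS is 0
    rw [← h0, Real.zero_rpow hα.ne', zero_div, ge_iff_le]
    apply intervalIntegral.integral_nonneg (by norm_num)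
    intro t _; positivity
  · rcases le_or_gt (-(1/2) : ℝ) ((inner ℝ y (x - y) : ℝ) / ‖x - y‖ ^ 2) with hc | hc
    · exact aux_bound α hα x y hd hc
    · -- swap x and y via t ↦ 1 - t
      have hd' : 0 < ‖y - x‖ := by rwa [norm_sub_rev]
      have hc' : -(1/2) ≤ (inner ℝ x (y - x) : ℝ) / ‖y - x‖ ^ 2 := by
        have hsum : (inner ℝ y (x - y) : ℝ) + (inner ℝ x (y - x) : ℝ) = -‖x - y‖ ^ 2 := by
          have hs : ‖x - y‖ ^ 2 = (inner ℝ (x - y) (x - y) : ℝ) :=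
            (real_inner_self_eq_norm_sq _).symm
          simp only [hs, inner_sub_left, inner_sub_right, real_inner_comm y x]
          ring
        have hn : ‖y - x‖ = ‖x - y‖ := norm_sub_rev _ _
        have hd2 : (0:ℝ) < ‖x - y‖ ^ 2 := by positivity
        rw [hn, le_div_iff₀ hd2]
        have hlt := hc
        rw [div_lt_iff₀ hd2] at hlt
        linarith
      have hswap := aux_bound α hα y x hd' hc'
      have heq : (∫ t in (0:ℝ)..1, ‖t • x + (1 - t) • y‖ ^ α) =
          ∫ t in (0:ℝ)..1, ‖t • y + (1 - t) • x‖ ^ α := by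
        have := intervalIntegral.integral_comp_sub_left
          (a := (0:ℝ)) (b := 1) (fun t : ℝ => ‖t • y + (1 - t) • x‖ ^ α) 1
        simp only [sub_self, sub_zero] at this
        rw [← this]
        congr 1
        ext t
        have : (1 - t) • y + (1 - (1 - t)) • x = t • x + (1 - t) • y := by
          rw [sub_sub_cancel]; abel
        rw [this]
      rw [heq, norm_sub_rev x y]
      exact hswap
end

section
/- Let n ≥ 2, let B(u,v,w) = diag[u^T A_1 v, ..., u^T A_n v] w for n×n real matrices A_1,...,A_n, let M = (∑_{i=1}^n |A_i|²)^{1/2} (Frobenius norms), and define G_B(u) = B(u,u,u)/|u| for u ≠ 0 and G_B(0) = 0. Then for all u, v in ℝ^n, |G_B(u) - G_B(v)| ≤ 2M (|u| + |v|) |u - v|. -/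
open Matrix Classical

/-- `B(u,v,w)` is the vector whose `i`-th component is `(uᵀ Aᵢ v) wᵢ`. -/
noncomputable def Bmap {n : ℕ} (A : Fin n → Matrix (Fin n) (Fin n) ℝ)
    (u v w : EuclideanSpace ℝ (Fin n)) : EuclideanSpace ℝ (Fin n) :=
  WithLp.toLp 2 (fun i => (u ⬝ᵥ (A i).mulVec v) * w i)

/-- `G_B(u) = B(u,u,u)/|u|`, extended by `0` at the origin. -/

noncomputable def GB {n : ℕ} (A : Fin n → Matrix (Fin n) (Fin n) ℝ)
    (u : EuclideanSpace ℝ (Fin n)) : EuclideanSpace ℝ (Fin n) :=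
  if u = 0 then 0 else ‖u‖⁻¹ • Bmap A u u u

/-!
Two Cauchy–Schwarz steps give `|B(u,v,w)| ≤ M |u| |v| |w|`, and trilinearity gives
`F(u) - F(v) = B(u-v,u,u) + B(v,u-v,u) + B(v,v,u-v)` for `F(u) = B(u,u,u)`. So `F` is bounded by
`M |u|³` and has Lipschitz modulus `M (|u|² + |u||v| + |v|²)`. For `|v| ≤ |u|` split
`G_B(u) - G_B(v) = |u|⁻¹ (F u - F v) + (|u|⁻¹ - |v|⁻¹) F v` and use
`||u|⁻¹ - |v|⁻¹| ≤ |u - v| / (|u| |v|)`: the total is `M (|u| + 2|v|²/|u| + |v|) |u - v|`,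
which is at most `2M (|u| + |v|) |u - v|`.
-/

open Finset

lemma sq_dotProduct_mulVec_le {m p : Type*} [Fintype m] [Fintype p] (B : Matrix m p ℝ)
    (u : m → ℝ) (v : p → ℝ) :
    (u ⬝ᵥ B *ᵥ v) ^ 2 ≤ (∑ j, ∑ k, B j k ^ 2) * ((∑ j, u j ^ 2) * ∑ k, v k ^ 2) :=
  calc (u ⬝ᵥ B *ᵥ v) ^ 2 ≤ (∑ j, u j ^ 2) * ∑ j, (B *ᵥ v) j ^ 2 := sum_mul_sq_le_sq_mul_sq _ _ _
    _ ≤ (∑ j, u j ^ 2) * ∑ j, (∑ k, B j k ^ 2) * ∑ k, v k ^ 2 := by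
        gcongr with j
        exact sum_mul_sq_le_sq_mul_sq _ _ _
    _ = _ := by rw [← sum_mul]; ring

section InvNormSmul

variable {E F : Type*} [SeminormedAddCommGroup E] [SeminormedAddCommGroup F] [NormedSpace ℝ F]
  {f : E → F} {M : ℝ}

lemma norm_inv_norm_smul_le (hf : ∀ v, ‖f v‖ ≤ M * ‖v‖ ^ 3) (v : E) :
    ‖‖v‖⁻¹ • f v‖ ≤ M * ‖v‖ ^ 2 := by
  rw [norm_smul, norm_inv, norm_norm]
  rcases eq_or_ne ‖v‖ 0 with hv | hv
  · simp [hv]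
  · calc ‖v‖⁻¹ * ‖f v‖ ≤ ‖v‖⁻¹ * (M * ‖v‖ ^ 3) := by gcongr; exact hf v
      _ = M * ‖v‖ ^ 2 := by field_simp

lemma norm_inv_norm_smul_sub_le_of_norm_le (hM : 0 ≤ M) (hf : ∀ v, ‖f v‖ ≤ M * ‖v‖ ^ 3)
    (hlip : ∀ u v, ‖f u - f v‖ ≤ M * (‖u‖ ^ 2 + ‖u‖ * ‖v‖ + ‖v‖ ^ 2) * ‖u - v‖)
    {u v : E} (hvu : ‖v‖ ≤ ‖u‖) :
    ‖‖u‖⁻¹ • f u - ‖v‖⁻¹ • f v‖ ≤ 2 * M * (‖u‖ + ‖v‖) * ‖u - v‖ := by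
  rcases (norm_nonneg v).eq_or_lt with hv | hv
  · have hud : ‖u‖ ≤ ‖u - v‖ := by simpa [← hv] using norm_sub_norm_le u v
    rw [← hv, _root_.inv_zero, zero_smul, sub_zero, add_zero]
    calc ‖‖u‖⁻¹ • f u‖ ≤ M * ‖u‖ ^ 2 := norm_inv_norm_smul_le hf u
      _ ≤ 2 * M * ‖u‖ * ‖u - v‖ := by nlinarith [mul_nonneg hM (norm_nonneg u)]
  have hu : 0 < ‖u‖ := hv.trans_le hvu
  have hinv : |‖u‖⁻¹ - ‖v‖⁻¹| ≤ ‖u - v‖ / (‖u‖ * ‖v‖) := by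
    rw [inv_sub_inv hu.ne' hv.ne', abs_div, abs_of_pos (mul_pos hu hv), abs_sub_comm]
    gcongr
    exact abs_norm_sub_norm_le u v
  calc ‖‖u‖⁻¹ • f u - ‖v‖⁻¹ • f v‖
      = ‖‖u‖⁻¹ • (f u - f v) + (‖u‖⁻¹ - ‖v‖⁻¹) • f v‖ := by rw [smul_sub, sub_smul]; abel_nf
    _ ≤ ‖u‖⁻¹ * ‖f u - f v‖ + |‖u‖⁻¹ - ‖v‖⁻¹| * ‖f v‖ := by
        refine (norm_add_le _ _).trans_eq ?_
        rw [norm_smul, norm_smul, norm_inv, norm_norm, Real.norm_eq_abs]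
    _ ≤ ‖u‖⁻¹ * (M * (‖u‖ ^ 2 + ‖u‖ * ‖v‖ + ‖v‖ ^ 2) * ‖u - v‖)
          + ‖u - v‖ / (‖u‖ * ‖v‖) * (M * ‖v‖ ^ 3) := by
        gcongr
        exacts [hlip u v, hf v]
    _ = M * ‖u - v‖ * (‖u‖ + ‖v‖ + 2 * (‖v‖ ^ 2 / ‖u‖)) := by field_simp; ring
    _ ≤ M * ‖u - v‖ * (2 * (‖u‖ + ‖v‖)) := by
        have hv_sq_div : ‖v‖ ^ 2 / ‖u‖ ≤ ‖v‖ := by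
          rw [div_le_iff₀ hu]
          nlinarith
        gcongr
        linarith
    _ = 2 * M * (‖u‖ + ‖v‖) * ‖u - v‖ := by ring

theorem norm_inv_norm_smul_sub_le (hM : 0 ≤ M) (hf : ∀ v, ‖f v‖ ≤ M * ‖v‖ ^ 3)
    (hlip : ∀ u v, ‖f u - f v‖ ≤ M * (‖u‖ ^ 2 + ‖u‖ * ‖v‖ + ‖v‖ ^ 2) * ‖u - v‖) (u v : E) :
    ‖‖u‖⁻¹ • f u - ‖v‖⁻¹ • f v‖ ≤ 2 * M * (‖u‖ + ‖v‖) * ‖u - v‖ := by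
  rcases le_total ‖v‖ ‖u‖ with hvu | huv
  · exact norm_inv_norm_smul_sub_le_of_norm_le hM hf hlip hvu
  · rw [norm_sub_rev, norm_sub_rev u, add_comm ‖u‖]
    exact norm_inv_norm_smul_sub_le_of_norm_le hM hf hlip huv

end InvNormSmul

section Bmap

variable {n : ℕ} (A : Fin n → Matrix (Fin n) (Fin n) ℝ)

lemma norm_Bmap_le (u v w : EuclideanSpace ℝ (Fin n)) :
    ‖Bmap A u v w‖ ≤ √(∑ i, ∑ j, ∑ k, A i j k ^ 2) * (‖u‖ * ‖v‖ * ‖w‖) := by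
  have hsq (x : EuclideanSpace ℝ (Fin n)) : ‖x‖ ^ 2 = ∑ i, x i ^ 2 := by
    simp [EuclideanSpace.norm_sq_eq]
  rw [← Real.sqrt_sq (by positivity : 0 ≤ ‖u‖ * ‖v‖ * ‖w‖), ← Real.sqrt_mul (by positivity),
    Real.le_sqrt (norm_nonneg _) (by positivity), hsq]
  calc ∑ i, Bmap A u v w i ^ 2 = ∑ i, (u ⬝ᵥ A i *ᵥ v) ^ 2 * w i ^ 2 := by simp [Bmap, mul_pow]
    _ ≤ ∑ i, (∑ j, ∑ k, A i j k ^ 2) * ((∑ j, u j ^ 2) * ∑ k, v k ^ 2) * ∑ k, w k ^ 2 := by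
        gcongr with i
        · exact sq_dotProduct_mulVec_le (A i) u v
        · exact single_le_sum (fun k _ => sq_nonneg (w k)) (mem_univ i)
    _ = _ := by rw [mul_pow, mul_pow, hsq u, hsq v, hsq w, ← sum_mul, ← sum_mul]; ring

lemma Bmap_self_sub_Bmap_self (u v : EuclideanSpace ℝ (Fin n)) :
    Bmap A u u u - Bmap A v v v
      = Bmap A (u - v) u u + Bmap A v (u - v) u + Bmap A v v (u - v) := by
  ext i
  simp only [Bmap, PiLp.sub_apply, PiLp.add_apply, WithLp.ofLp_sub, sub_dotProduct, mulVec_sub,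
    dotProduct_sub]
  ring

lemma norm_Bmap_self_sub_le {M : ℝ}
    (hB : ∀ x y z : EuclideanSpace ℝ (Fin n), ‖Bmap A x y z‖ ≤ M * (‖x‖ * ‖y‖ * ‖z‖))
    (u v : EuclideanSpace ℝ (Fin n)) :
    ‖Bmap A u u u - Bmap A v v v‖ ≤ M * (‖u‖ ^ 2 + ‖u‖ * ‖v‖ + ‖v‖ ^ 2) * ‖u - v‖ := by
  rw [Bmap_self_sub_Bmap_self]
  calc _ ≤ ‖Bmap A (u - v) u u‖ + ‖Bmap A v (u - v) u‖ + ‖Bmap A v v (u - v)‖ := norm_add₃_le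
    _ ≤ M * (‖u - v‖ * ‖u‖ * ‖u‖) + M * (‖v‖ * ‖u - v‖ * ‖u‖) + M * (‖v‖ * ‖v‖ * ‖u - v‖) :=
        add_le_add_three (hB _ _ _) (hB _ _ _) (hB _ _ _)
    _ = _ := by ring

/-- The junk value `‖0‖⁻¹ = 0` absorbs the case `u = 0`. -/
lemma GB_eq_inv_norm_smul (u : EuclideanSpace ℝ (Fin n)) : GB A u = ‖u‖⁻¹ • Bmap A u u u := by
  unfold GB
  split_ifs with hu
  · simp [hu]
  · rfl

end Bmap

theorem norm_GB_sub_GB_le_general {n : ℕ} (A : Fin n → Matrix (Fin n) (Fin n) ℝ)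
    (M : ℝ) (hM : M = Real.sqrt (∑ i, ∑ j, ∑ k, (A i j k) ^ 2))
    (u v : EuclideanSpace ℝ (Fin n)) :
    ‖GB A u - GB A v‖ ≤ 2 * M * (‖u‖ + ‖v‖) * ‖u - v‖ := by
  have hB : ∀ x y z : EuclideanSpace ℝ (Fin n), ‖Bmap A x y z‖ ≤ M * (‖x‖ * ‖y‖ * ‖z‖) :=
    hM ▸ norm_Bmap_le A
  rw [GB_eq_inv_norm_smul, GB_eq_inv_norm_smul]
  refine norm_inv_norm_smul_sub_le (hM ▸ Real.sqrt_nonneg _) (fun v => ?_)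
    (norm_Bmap_self_sub_le A hB) u v
  calc ‖Bmap A v v v‖ ≤ M * (‖v‖ * ‖v‖ * ‖v‖) := hB v v v
    _ = M * ‖v‖ ^ 3 := by ring

theorem norm_GB_sub_GB_le {n : ℕ} (hn : 2 ≤ n) (A : Fin n → Matrix (Fin n) (Fin n) ℝ)
    (M : ℝ) (hM : M = Real.sqrt (∑ i, ∑ j, ∑ k, (A i j k) ^ 2))
    (u v : EuclideanSpace ℝ (Fin n)) :
    ‖GB A u - GB A v‖ ≤ 2 * M * (‖u‖ + ‖v‖) * ‖u - v‖ :=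
  norm_GB_sub_GB_le_general A M hM u v
end

section
/- Let n ≥ 2 and let A_1, ..., A_n be n×n real matrices. Suppose there exists λ > 0 such that the operator norm ‖A_i - λ I_n‖ ≤ λ/4 for all i. Define B(u,v,w) = diag[u^T A_1 v, ..., u^T A_n v] w and G_B(u) = B(u,u,u)/|u| for u ≠ 0, G_B(0) = 0. Then G_B is monotone: (G_B(u) - G_B(v))·(u - v) ≥ 0 for all u, v ∈ ℝ^n. -/
open Matrix Classical

/-!
With `Eᵢ = Aᵢ - λ I` and `hᵢ(u) = ⟪Eᵢ u, u⟫ / ‖u‖` one has `G_B(u)ᵢ = (λ‖u‖ + hᵢ(u)) uᵢ`.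
The radial map `u ↦ ‖u‖ u` is strongly monotone,
`⟪‖u‖ u - ‖v‖ v, u - v⟫ ≥ (‖u‖ + ‖v‖) ‖u - v‖² / 2`,
while, if `‖Eᵢ‖ ≤ c`, then `|hᵢ(u)| ≤ c ‖u‖` and `hᵢ` is `3c`-Lipschitz, so that the diagonal
perturbation `u ↦ (hᵢ(u) uᵢ)ᵢ` lowers this by at most `2c (‖u‖ + ‖v‖) ‖u - v‖²`
(split `(φu - ψv)(u - v)` into `(φ + ψ)/2 (u - v)² + (φ - ψ)/2 (u + v)(u - v)` and use
Cauchy–Schwarz). The two balance exactly at `c = λ/4`.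
-/

open scoped RealInnerProductSpace

section InnerProductSpace

variable {E : Type*} [NormedAddCommGroup E] [InnerProductSpace ℝ E]

theorem le_inner_norm_smul_sub_norm_smul (u v : E) :
    (‖u‖ + ‖v‖) / 2 * ‖u - v‖ ^ 2 ≤ ⟪‖u‖ • u - ‖v‖ • v, u - v⟫ := by
  have hd : ‖u - v‖ ^ 2 = ‖u‖ ^ 2 - 2 * ⟪u, v⟫ + ‖v‖ ^ 2 := norm_sub_sq_real u v
  have hexp : ⟪‖u‖ • u - ‖v‖ • v, u - v⟫ = ‖u‖ ^ 3 + ‖v‖ ^ 3 - (‖u‖ + ‖v‖) * ⟪u, v⟫ := by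
    simp only [inner_sub_left, inner_sub_right, inner_smul_left, real_inner_self_eq_norm_sq,
      real_inner_comm u v, RCLike.conj_to_real]
    ring
  rw [hexp, hd]
  nlinarith [mul_nonneg (add_nonneg (norm_nonneg u) (norm_nonneg v)) (sq_nonneg (‖u‖ - ‖v‖))]

namespace ContinuousLinearMap

variable (T : E →L[ℝ] E)

theorem abs_inner_apply_le (x y : E) : |⟪T x, y⟫| ≤ ‖T‖ * ‖x‖ * ‖y‖ :=
  (abs_real_inner_le_norm _ _).trans (by gcongr; exact T.le_opNorm x)

-- Division by `‖0‖ = 0` gives `0`, matching the convention `G_B(0) = 0`.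
noncomputable def quadDivNorm (x : E) : ℝ := ⟪T x, x⟫ / ‖x‖

theorem abs_quadDivNorm_le (x : E) : |T.quadDivNorm x| ≤ ‖T‖ * ‖x‖ := by
  rw [quadDivNorm, abs_div, abs_norm]
  exact div_le_of_le_mul₀ (norm_nonneg x) (by positivity) (T.abs_inner_apply_le x x)

theorem abs_quadDivNorm_sub_le (x y : E) :
    |T.quadDivNorm x - T.quadDivNorm y| ≤ 3 * ‖T‖ * ‖x - y‖ := by
  wlog hyx : ‖y‖ ≤ ‖x‖ generalizing x y
  · rw [abs_sub_comm, norm_sub_rev]; exact this y x (le_of_not_ge hyx)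
  rcases eq_or_ne y 0 with rfl | hy
  · simpa [quadDivNorm] using (T.abs_quadDivNorm_le x).trans
      (by nlinarith [norm_nonneg T, norm_nonneg x])
  have ha : 0 < ‖x‖ := (norm_pos_iff.mpr hy).trans_le hyx
  have hdiff : |⟪T x, x⟫ - ⟪T y, y⟫| ≤ 2 * ‖T‖ * ‖x - y‖ * ‖x‖ := by
    have h : ⟪T x, x⟫ - ⟪T y, y⟫ = ⟪T (x - y), x⟫ + ⟪T y, x - y⟫ := by
      simp only [map_sub, inner_sub_left, inner_sub_right]; ring
    rw [h]
    refine (abs_add_le _ _).trans ?_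
    nlinarith [T.abs_inner_apply_le (x - y) x, T.abs_inner_apply_le y (x - y),
      mul_le_mul_of_nonneg_left hyx (mul_nonneg (norm_nonneg T) (norm_nonneg (x - y)))]
  have hnorm : |‖y‖ - ‖x‖| ≤ ‖x - y‖ := by
    rw [abs_sub_comm]; exact abs_norm_sub_norm_le x y
  -- The variation of `1 / ‖·‖` comes with the factor `T.quadDivNorm y`, of size at most `‖T‖ ‖y‖`.
  have hsplit : T.quadDivNorm x - T.quadDivNorm y
      = ((⟪T x, x⟫ - ⟪T y, y⟫) + T.quadDivNorm y * (‖y‖ - ‖x‖)) / ‖x‖ := by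
    simp only [quadDivNorm]; field_simp; ring
  rw [hsplit, abs_div, abs_norm, div_le_iff₀ ha]
  refine (abs_add_le _ _).trans ?_
  rw [abs_mul]
  nlinarith [mul_le_mul (T.abs_quadDivNorm_le y) hnorm (abs_nonneg _) (by positivity),
    mul_le_mul_of_nonneg_left hyx (mul_nonneg (norm_nonneg T) (norm_nonneg (x - y)))]

end ContinuousLinearMap

end InnerProductSpace

namespace EuclideanSpace

variable {ι : Type*} [Fintype ι]

theorem sum_abs_mul_abs_le (w z : EuclideanSpace ℝ ι) : ∑ i, |w i| * |z i| ≤ ‖w‖ * ‖z‖ := by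
  simpa [EuclideanSpace.norm_eq] using
    Real.sum_mul_le_sqrt_mul_sqrt Finset.univ (fun i => |w i|) (fun i => |z i|)

theorem abs_sum_mul_mul_le {d : ι → ℝ} {t : ℝ} (hd : ∀ i, |d i| ≤ t)
    (w z : EuclideanSpace ℝ ι) : |∑ i, d i * w i * z i| ≤ t * ‖w‖ * ‖z‖ := by
  rcases isEmpty_or_nonempty ι with hι | hι
  · simp [EuclideanSpace.norm_eq]
  have ht : 0 ≤ t := (abs_nonneg _).trans (hd hι.some)
  calc |∑ i, d i * w i * z i| ≤ ∑ i, t * (|w i| * |z i|) := by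
        refine (Finset.abs_sum_le_sum_abs _ _).trans (Finset.sum_le_sum fun i _ => ?_)
        rw [abs_mul, abs_mul, mul_assoc]
        exact mul_le_mul_of_nonneg_right (hd i) (by positivity)
    _ ≤ t * ‖w‖ * ‖z‖ := by
        rw [← Finset.mul_sum, mul_assoc]
        exact mul_le_mul_of_nonneg_left (sum_abs_mul_abs_le w z) ht

theorem neg_le_sum_mul_sub_mul_mul_sub {φ ψ : ι → ℝ} {r s t : ℝ}
    (hφ : ∀ i, |φ i| ≤ r) (hψ : ∀ i, |ψ i| ≤ s) (hφψ : ∀ i, |φ i - ψ i| ≤ t)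
    (u v : EuclideanSpace ℝ ι) :
    -((r + s) / 2 * ‖u - v‖ ^ 2 + t / 2 * ‖u + v‖ * ‖u - v‖)
      ≤ ∑ i, (φ i * u i - ψ i * v i) * (u i - v i) := by
  have hsum : ∑ i, (φ i * u i - ψ i * v i) * (u i - v i)
      = ∑ i, (φ i + ψ i) / 2 * (u - v) i * (u - v) i
        + ∑ i, (φ i - ψ i) / 2 * (u + v) i * (u - v) i := by
    rw [← Finset.sum_add_distrib]
    refine Finset.sum_congr rfl fun i _ => ?_
    simp only [PiLp.add_apply, PiLp.sub_apply]
    ring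
  have hmean := abs_sum_mul_mul_le (d := fun i => (φ i + ψ i) / 2) (t := (r + s) / 2)
    (fun i => by rw [abs_div, abs_two]; linarith [abs_add_le (φ i) (ψ i), hφ i, hψ i])
    (u - v) (u - v)
  have hdiff := abs_sum_mul_mul_le (d := fun i => (φ i - ψ i) / 2) (t := t / 2)
    (fun i => by rw [abs_div, abs_two]; linarith [hφψ i]) (u + v) (u - v)
  rw [hsum]
  nlinarith [neg_abs_le (∑ i, (φ i + ψ i) / 2 * (u - v) i * (u - v) i),
    neg_abs_le (∑ i, (φ i - ψ i) / 2 * (u + v) i * (u - v) i)]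

end EuclideanSpace

theorem GB_apply {n : ℕ} (A : Fin n → Matrix (Fin n) (Fin n) ℝ) (lam : ℝ)
    (u : EuclideanSpace ℝ (Fin n)) (i : Fin n) :
    GB A u i = (lam * ‖u‖ + (toEuclideanCLM (𝕜 := ℝ) (A i - lam • 1)).quadDivNorm u) * u i := by
  have hdot : u ⬝ᵥ u = ‖u‖ ^ 2 := by
    rw [← real_inner_self_eq_norm_sq, EuclideanSpace.inner_eq_star_dotProduct, star_trivial]
  have hquad : u ⬝ᵥ (A i).mulVec u
      = ⟪toEuclideanCLM (𝕜 := ℝ) (A i - lam • 1) u, u⟫ + lam * ‖u‖ ^ 2 := by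
    rw [real_inner_comm, inner_toEuclideanCLM, sub_mulVec, dotProduct_sub, smul_mulVec,
      one_mulVec, dotProduct_smul, smul_eq_mul, hdot]
    ring
  by_cases hu : u = 0
  · simp [GB, hu]
  simp only [GB, if_neg hu, Bmap, PiLp.smul_apply, smul_eq_mul, hquad,
    ContinuousLinearMap.quadDivNorm]
  field_simp
  ring

theorem GB_monotone_of_near_identity_general {n : ℕ}
    (A : Fin n → Matrix (Fin n) (Fin n) ℝ)
    (h : ∃ lam : ℝ, 0 < lam ∧ ∀ i,
      ‖Matrix.toEuclideanCLM (𝕜 := ℝ) (n := Fin n) (A i - lam • 1)‖ ≤ lam / 4) :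
    ∀ u v : EuclideanSpace ℝ (Fin n), 0 ≤ @inner ℝ _ _ (GB A u - GB A v) (u - v) := by
  obtain ⟨lam, hlam, hA⟩ := h
  intro u v
  let T i := toEuclideanCLM (𝕜 := ℝ) (A i - lam • 1)
  have hsplit : ⟪GB A u - GB A v, u - v⟫ = lam * ⟪‖u‖ • u - ‖v‖ • v, u - v⟫
      + ∑ i, ((T i).quadDivNorm u * u i - (T i).quadDivNorm v * v i) * (u i - v i) := by
    simp only [PiLp.inner_apply, PiLp.sub_apply, PiLp.smul_apply, GB_apply A lam, Finset.mul_sum,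
      ← Finset.sum_add_distrib, RCLike.inner_apply, conj_trivial, smul_eq_mul]
    exact Finset.sum_congr rfl fun i _ => by ring
  have hperturb := EuclideanSpace.neg_le_sum_mul_sub_mul_mul_sub
    (r := lam / 4 * ‖u‖) (s := lam / 4 * ‖v‖) (t := 3 * (lam / 4) * ‖u - v‖)
    (fun i => ((T i).abs_quadDivNorm_le u).trans (by gcongr; exact hA i))
    (fun i => ((T i).abs_quadDivNorm_le v).trans (by gcongr; exact hA i))
    (fun i => ((T i).abs_quadDivNorm_sub_le u v).trans (by gcongr; exact hA i)) u v
  rw [hsplit]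
  nlinarith [mul_le_mul_of_nonneg_left (le_inner_norm_smul_sub_norm_smul u v) hlam.le,
    mul_le_mul_of_nonneg_left (norm_add_le u v) (by positivity : 0 ≤ lam * ‖u - v‖ ^ 2)]

theorem GB_monotone_of_near_identity {n : ℕ} (hn : 2 ≤ n)
    (A : Fin n → Matrix (Fin n) (Fin n) ℝ)
    (h : ∃ lam : ℝ, 0 < lam ∧ ∀ i,
      ‖Matrix.toEuclideanCLM (𝕜 := ℝ) (n := Fin n) (A i - lam • 1)‖ ≤ lam / 4) :
    ∀ u v : EuclideanSpace ℝ (Fin n), 0 ≤ @inner ℝ _ _ (GB A u - GB A v) (u - v) :=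
  GB_monotone_of_near_identity_general A h
end

section
/- Let A be an n×n real matrix with u^T A u ≥ κ₀² |u|² for all u ∈ ℝ^n (κ₀ > 0), and let α satisfy 0 < α < κ₀² / ‖A‖, where ‖A‖ is the operator norm. Define F(u) = |u|^α A u. Then there exists a constant C > 0 such that (F(u) - F(v))·(u - v) ≥ C |u - v|^{α+2} for all u, v ∈ ℝ^n; in fact one may take C = (κ₀² − α‖A‖) / (2^{α+1}(α+1)). -/
open Matrix
open scoped RealInnerProductSpace

/-!
Write `F u = ‖u‖ ^ α • T u` and assume `‖v‖ ≤ ‖u‖`. Then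
`F u - F v = ‖u‖ ^ α • T (u - v) + (‖u‖ ^ α - ‖v‖ ^ α) • T v`. Coercivity bounds the first term,
paired with `u - v`, below by `κ² ‖u‖ ^ α ‖u - v‖²`; by weighted AM-GM,
`(‖u‖ ^ α - ‖v‖ ^ α) ‖v‖ ≤ α ‖u‖ ^ α ‖u - v‖`, so the second term costs at most
`α ‖T‖ ‖u‖ ^ α ‖u - v‖²`. Since `‖u‖ ≥ ‖u - v‖ / 2`, this gives the constant
`(κ² - α ‖T‖) / 2 ^ α`, which dominates the one claimed.
-/

-- Weighted AM-GM `a ^ α * b ≤ (α * a ^ (α + 1) + b ^ (α + 1)) / (α + 1)`, rearranged.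
lemma Real.rpow_sub_rpow_mul_le {α a b : ℝ} (hα : 0 < α) (hb : 0 ≤ b) (hba : b ≤ a) :
    (a ^ α - b ^ α) * b ≤ α * a ^ α * (a - b) := by
  have ha : 0 ≤ a := hb.trans hba
  have hα1 : 0 < α + 1 := by linarith
  have hamgm := Real.geom_mean_le_arith_mean2_weighted (w₁ := α / (α + 1)) (w₂ := 1 / (α + 1))
    (by positivity) (by positivity) (Real.rpow_nonneg ha (α + 1)) (Real.rpow_nonneg hb (α + 1))
    (by field_simp)
  rw [← Real.rpow_mul ha, ← Real.rpow_mul hb, mul_div_cancel₀ _ hα1.ne', mul_one_div_cancel hα1.ne',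
    Real.rpow_one, Real.rpow_add_one' ha hα1.ne', Real.rpow_add_one' hb hα1.ne'] at hamgm
  rw [div_mul_eq_mul_div, one_div_mul_eq_div, ← add_div, le_div_iff₀ hα1] at hamgm
  linarith

section

variable {E : Type*} [NormedAddCommGroup E] [InnerProductSpace ℝ E]

lemma le_inner_norm_rpow_smul_sub_of_norm_le (T : E →L[ℝ] E) {c α : ℝ} (hα : 0 < α)
    (hT : ∀ u, c * ‖u‖ ^ 2 ≤ ⟪u, T u⟫) {u v : E} (hvu : ‖v‖ ≤ ‖u‖) :
    (c - α * ‖T‖) * ‖u‖ ^ α * ‖u - v‖ ^ 2 ≤ ⟪‖u‖ ^ α • T u - ‖v‖ ^ α • T v, u - v⟫ := by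
  set w := u - v
  have hsplit : ⟪‖u‖ ^ α • T u - ‖v‖ ^ α • T v, w⟫ =
      ‖u‖ ^ α * ⟪w, T w⟫ + (‖u‖ ^ α - ‖v‖ ^ α) * ⟪T v, w⟫ := by
    have : ‖u‖ ^ α • T u - ‖v‖ ^ α • T v = ‖u‖ ^ α • T w + (‖u‖ ^ α - ‖v‖ ^ α) • T v := by
      simp only [w, map_sub]; module
    rw [this, inner_add_left, real_inner_smul_left, real_inner_smul_left, real_inner_comm w]
  have hgap : 0 ≤ ‖u‖ ^ α - ‖v‖ ^ α :=
    sub_nonneg.2 (Real.rpow_le_rpow (norm_nonneg v) hvu hα.le)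
  have hcross : -(‖T‖ * ‖v‖ * ‖w‖) ≤ ⟪T v, w⟫ := by
    refine neg_le_of_abs_le ((abs_real_inner_le_norm _ _).trans ?_)
    gcongr
    exact T.le_opNorm v
  have hyoung : (‖u‖ ^ α - ‖v‖ ^ α) * ‖v‖ ≤ α * ‖u‖ ^ α * ‖w‖ :=
    (Real.rpow_sub_rpow_mul_le hα (norm_nonneg v) hvu).trans <| by
      gcongr; exact norm_sub_norm_le u v
  have hcoer := mul_le_mul_of_nonneg_left (hT w) (Real.rpow_nonneg (norm_nonneg u) α)
  have hcross' := mul_le_mul_of_nonneg_left hcross hgap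
  have hyoung' := mul_le_mul_of_nonneg_right hyoung
    (mul_nonneg (norm_nonneg T) (norm_nonneg w))
  rw [hsplit]
  linarith

theorem le_inner_norm_rpow_smul_sub (T : E →L[ℝ] E) {c α : ℝ} (hα : 0 < α)
    (hT : ∀ u, c * ‖u‖ ^ 2 ≤ ⟪u, T u⟫) (hcT : α * ‖T‖ ≤ c) (u v : E) :
    (c - α * ‖T‖) / 2 ^ α * ‖u - v‖ ^ (α + 2) ≤ ⟪‖u‖ ^ α • T u - ‖v‖ ^ α • T v, u - v⟫ := by
  wlog hvu : ‖v‖ ≤ ‖u‖ generalizing u v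
  · have h := this v u (le_of_not_ge hvu)
    rwa [norm_sub_rev, ← inner_neg_neg, neg_sub, neg_sub] at h
  have hw : ‖u - v‖ / 2 ≤ ‖u‖ := by linarith [norm_sub_le u v]
  calc (c - α * ‖T‖) / 2 ^ α * ‖u - v‖ ^ (α + 2)
      = (c - α * ‖T‖) * (‖u - v‖ / 2) ^ α * ‖u - v‖ ^ 2 := by
        rw [Real.div_rpow (norm_nonneg _) zero_le_two,
          Real.rpow_add' (norm_nonneg _) (add_pos hα two_pos).ne', Real.rpow_two]
        ring
    _ ≤ (c - α * ‖T‖) * ‖u‖ ^ α * ‖u - v‖ ^ 2 := by gcongr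
    _ ≤ _ := le_inner_norm_rpow_smul_sub_of_norm_le T hα hT hvu

end

theorem power_monotone_of_small_alpha_general {n : ℕ}
    (A : Matrix (Fin n) (Fin n) ℝ) (κ : ℝ)
    (hco : ∀ u : EuclideanSpace ℝ (Fin n), κ ^ 2 * ‖u‖ ^ 2 ≤ u ⬝ᵥ A.mulVec u)
    (α : ℝ) (hα : 0 < α)
    (hαA : α < κ ^ 2 / ‖Matrix.toEuclideanCLM (𝕜 := ℝ) (n := Fin n) A‖) :
    0 < (κ ^ 2 - α * ‖Matrix.toEuclideanCLM (𝕜 := ℝ) (n := Fin n) A‖) /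
        (2 ^ (α + 1) * (α + 1)) ∧
      ∀ u v : EuclideanSpace ℝ (Fin n),
        (κ ^ 2 - α * ‖Matrix.toEuclideanCLM (𝕜 := ℝ) (n := Fin n) A‖) /
            (2 ^ (α + 1) * (α + 1)) * ‖u - v‖ ^ (α + 2) ≤
          @inner ℝ (EuclideanSpace ℝ (Fin n)) _
            ((‖u‖ ^ α • (WithLp.toLp 2 (A.mulVec u) : EuclideanSpace ℝ (Fin n))) -
              (‖v‖ ^ α • (WithLp.toLp 2 (A.mulVec v) : EuclideanSpace ℝ (Fin n)))) (u - v) := by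
  set T := Matrix.toEuclideanCLM (𝕜 := ℝ) (n := Fin n) A
  have hT : ∀ u, κ ^ 2 * ‖u‖ ^ 2 ≤ ⟪u, T u⟫ := fun u ↦ (inner_toEuclideanCLM A u u).symm ▸ hco u
  have hTpos : 0 < ‖T‖ := (norm_nonneg T).lt_of_ne fun h ↦ by
    rw [← h, div_zero] at hαA; linarith
  have hgap : 0 < κ ^ 2 - α * ‖T‖ := sub_pos.2 ((lt_div_iff₀ hTpos).1 hαA)
  have hpow : (2 : ℝ) ^ α ≤ 2 ^ (α + 1) * (α + 1) :=
    (Real.rpow_le_rpow_of_exponent_le one_le_two (by linarith)).trans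
      (le_mul_of_one_le_right (by positivity) (by linarith))
  refine ⟨by positivity, fun u v ↦ ?_⟩
  calc _ ≤ (κ ^ 2 - α * ‖T‖) / 2 ^ α * ‖u - v‖ ^ (α + 2) := by gcongr
    _ ≤ _ := le_inner_norm_rpow_smul_sub T hα hT (sub_nonneg.1 hgap.le) u v

theorem power_monotone_of_small_alpha {n : ℕ}
    (A : Matrix (Fin n) (Fin n) ℝ) (κ : ℝ) (hκ : 0 < κ)
    (hco : ∀ u : EuclideanSpace ℝ (Fin n), κ ^ 2 * ‖u‖ ^ 2 ≤ u ⬝ᵥ A.mulVec u)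
    (α : ℝ) (hα : 0 < α)
    (hαA : α < κ ^ 2 / ‖Matrix.toEuclideanCLM (𝕜 := ℝ) (n := Fin n) A‖) :
    0 < (κ ^ 2 - α * ‖Matrix.toEuclideanCLM (𝕜 := ℝ) (n := Fin n) A‖) /
        (2 ^ (α + 1) * (α + 1)) ∧
      ∀ u v : EuclideanSpace ℝ (Fin n),
        (κ ^ 2 - α * ‖Matrix.toEuclideanCLM (𝕜 := ℝ) (n := Fin n) A‖) /
            (2 ^ (α + 1) * (α + 1)) * ‖u - v‖ ^ (α + 2) ≤
          @inner ℝ (EuclideanSpace ℝ (Fin n)) _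
            ((‖u‖ ^ α • (WithLp.toLp 2 (A.mulVec u) : EuclideanSpace ℝ (Fin n))) -
              (‖v‖ ^ α • (WithLp.toLp 2 (A.mulVec v) : EuclideanSpace ℝ (Fin n)))) (u - v) :=
  power_monotone_of_small_alpha_general A κ hco α hα hαA
end
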